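/- Let k ≥ 1 and W a graphon. Define C₀ as the minimum μ^{⊗k}-relatively complete sub-σ-algebra of 𝓑^{⊗k} whose L² subspace is invariant under every adjacency operator A^W_{ij} (i ≠ j); for n ≥ 0, let C_{n+1} be the intersection of all μ^{⊗k}-relatively complete sub-σ-algebras D ⊇ C_n of 𝓑^{⊗k} satisfying N_j(L²(X^k, C_n, μ^{⊗k})) ⊆ L²(X^k, D, μ^{⊗k}) for every j ∈ {1,…,k}; and let C^k_W be the smallest μ^{⊗k}-relatively complete sub-σ-algebra containing ⋃_{n∈ℕ} C_n. Then C^k_W is the minimum (with respect to inclusion) μ^{⊗k}-relatively complete sub-σ-algebra C of 𝓑^{⊗k} such that L²(X^k, C, μ^{⊗k}) is invariant under every operator of the family 𝕋^k_W. -/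

import Mathlib

open MeasureTheory

noncomputable section

/-- A graphon: symmetric measurable `W : X × X → [0,1]`. -/
structure IsGraphon {X : Type*} [MeasurableSpace X] (W : X → X → ℝ) : Prop where
  measurable : Measurable (Function.uncurry W)
  symm : ∀ x y, W x y = W y x
  nonneg : ∀ x y, 0 ≤ W x y
  le_one : ∀ x y, W x y ≤ 1

/-- A sub-σ-algebra, wrapped in a structure (so that it does not interfere with
instance resolution). -/
structure SubSigma (α : Type*) where
  σ : MeasurableSpace α

/-- `m'` is a `μ`-relatively complete sub-σ-algebra of the ambient σ-algebra `mα`. -/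
def RelComplete {X : Type*} [mα : MeasurableSpace X]
    (μ : Measure X) (m' : SubSigma X) : Prop :=
  ∀ Z Z₀ : Set X, MeasurableSet[mα] Z → MeasurableSet[m'.σ] Z₀ →
    μ (symmDiff Z Z₀) = 0 → MeasurableSet[m'.σ] Z

/-- `L²(X^k, C, μ^{⊗k})` is invariant under every adjacency operator
`A^W_{ij} : f ↦ (x̄ ↦ W(x_i, x_j) · f(x̄))`, `i ≠ j`. -/
def AInvariant {X : Type*} [MeasurableSpace X] (μ : Measure X) (W : X → X → ℝ)
    {k : ℕ} (C : SubSigma (Fin k → X)) : Prop :=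
  ∀ i j : Fin k, i ≠ j → ∀ f : (Fin k → X) → ℝ,
    MemLp f 2 (Measure.pi fun _ : Fin k => μ) →
    AEStronglyMeasurable[C.σ] f (Measure.pi fun _ : Fin k => μ) →
    MemLp (fun x => W (x i) (x j) * f x) 2 (Measure.pi fun _ : Fin k => μ) ∧
      AEStronglyMeasurable[C.σ] (fun x => W (x i) (x j) * f x)
        (Measure.pi fun _ : Fin k => μ)

/-- The neighbor operators `N_j : f ↦ (x̄ ↦ ∫ f(x̄[y/j]) dμ(y))` map `L²(X^k, C, μ^{⊗k})`
into `L²(X^k, D, μ^{⊗k})`. -/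
def NMapsInto {X : Type*} [MeasurableSpace X] (μ : Measure X)
    {k : ℕ} (C D : SubSigma (Fin k → X)) : Prop :=
  ∀ (j : Fin k) (f : (Fin k → X) → ℝ),
    MemLp f 2 (Measure.pi fun _ : Fin k => μ) →
    AEStronglyMeasurable[C.σ] f (Measure.pi fun _ : Fin k => μ) →
    MemLp (fun x => ∫ y, f (Function.update x j y) ∂μ) 2
        (Measure.pi fun _ : Fin k => μ) ∧
      AEStronglyMeasurable[D.σ] (fun x => ∫ y, f (Function.update x j y) ∂μ)
        (Measure.pi fun _ : Fin k => μ)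

/-- The iterative construction: `C₀` is the smallest `μ^{⊗k}`-relatively complete
sub-σ-algebra whose `L²` subspace is invariant under all adjacency operators `A^W_{ij}`,
and `C_{n+1}` is the intersection of all `μ^{⊗k}`-relatively complete `D ⊇ C_n` with
`N_j(L²(C_n)) ⊆ L²(D)` for every `j`. -/
noncomputable def CSeq {X : Type*} [MeasurableSpace X] (μ : Measure X) (W : X → X → ℝ)
    (k : ℕ) : ℕ → MeasurableSpace (Fin k → X)
  | 0 => sInf {m | m ≤ (MeasurableSpace.pi : MeasurableSpace (Fin k → X)) ∧
      RelComplete (mα := (MeasurableSpace.pi : MeasurableSpace (Fin k → X))) (Measure.pi fun _ : Fin k => μ) ⟨m⟩ ∧ AInvariant μ W ⟨m⟩}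
  | (n + 1) => sInf {m | m ≤ (MeasurableSpace.pi : MeasurableSpace (Fin k → X)) ∧
      RelComplete (mα := (MeasurableSpace.pi : MeasurableSpace (Fin k → X))) (Measure.pi fun _ : Fin k => μ) ⟨m⟩ ∧ CSeq μ W k n ≤ m ∧
      NMapsInto μ ⟨CSeq μ W k n⟩ ⟨m⟩}

/-- `C^k_W`: the smallest `μ^{⊗k}`-relatively complete sub-σ-algebra containing all the
`C_n` of the iterative construction. -/
noncomputable def CLimit {X : Type*} [MeasurableSpace X] (μ : Measure X) (W : X → X → ℝ)
    (k : ℕ) : MeasurableSpace (Fin k → X) :=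
  sInf {m | m ≤ (MeasurableSpace.pi : MeasurableSpace (Fin k → X)) ∧
    RelComplete (mα := (MeasurableSpace.pi : MeasurableSpace (Fin k → X))) (Measure.pi fun _ : Fin k => μ) ⟨m⟩ ∧ ∀ n : ℕ, CSeq μ W k n ≤ m}

/-!
Minimality is formal: a relatively complete σ-algebra whose `L²` space is invariant under `𝕋^k_W`
contains every `C_n` (by induction on `n`), hence `C^k_W`. For invariance under `A^W_{ij}` it
suffices that `x ↦ W(x_i, x_j)` is `C₀`-measurable, which follows by applying `A^W_{ij}` to the
constant `1`. For invariance under `N_j`: up to null sets `C^k_W` is the σ-algebra generated by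
the increasing sequence `C_n`, so for `f ∈ L²(C^k_W)` Lévy's upward theorem gives
`E[f | C_n] → f` in `L¹`. Since `N_j` is an `L¹`-contraction mapping `L²(C_n)` into
`L²(C_{n+1})`, `N_j f` is an `L¹`-limit of `C^k_W`-measurable functions. The contraction
property (in every `Lᵖ`, `1 ≤ p < ∞`) comes from Jensen's inequality on each fibre together
with the fact that `(x̄, y) ↦ x̄[y/j]` pushes `μ^{⊗k} ⊗ μ` forward to `μ^{⊗k}`.
-/

open scoped ENNReal
open Filter Topology

section Neighbor

variable {ι X E : Type*} [Fintype ι] [DecidableEq ι] [MeasurableSpace X]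
  [NormedAddCommGroup E] [NormedSpace ℝ E]
  {μ : Measure X} [IsProbabilityMeasure μ]

theorem measurePreserving_update (j : ι) :
    MeasurePreserving (fun p : (ι → X) × X => Function.update p.1 j p.2)
      ((Measure.pi fun _ => μ).prod μ) (Measure.pi fun _ => μ) := by
  have hmeas : Measurable fun p : (ι → X) × X => Function.update p.1 j p.2 := by fun_prop
  refine ⟨hmeas, (Measure.pi_eq fun s hs => ?_).symm⟩
  have hpre : (fun p : (ι → X) × X => Function.update p.1 j p.2) ⁻¹' Set.univ.pi s =
      Set.univ.pi (Function.update s j Set.univ) ×ˢ s j := by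
    ext ⟨x, y⟩
    simp only [Set.mem_preimage, Set.mem_pi, Set.mem_univ, true_implies, Set.mem_prod]
    refine ⟨fun h => ⟨fun i => ?_, by simpa using h j⟩, fun ⟨h, hy⟩ i => ?_⟩
    · rcases eq_or_ne i j with rfl | hij
      · simp
      · simpa [hij] using h i
    · rcases eq_or_ne i j with rfl | hij
      · simpa using hy
      · simpa [hij] using h i
  rw [Measure.map_apply hmeas (.univ_pi hs), hpre, Measure.prod_prod, Measure.pi_pi,
    ← Finset.prod_erase_mul _ _ (Finset.mem_univ j),
    ← Finset.prod_erase_mul _ _ (Finset.mem_univ j)]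
  simp only [Function.update_self, measure_univ, mul_one]
  congr 1
  exact Finset.prod_congr rfl fun i hi => by rw [Function.update_of_ne (Finset.ne_of_mem_erase hi)]

def neighbor (μ : Measure X) (j : ι) (f : (ι → X) → E) (x : ι → X) : E :=
  ∫ y, f (Function.update x j y) ∂μ

local notation "ν" => Measure.pi fun _ : ι => μ

theorem lintegral_lintegral_update (j : ι) {g : (ι → X) → ℝ≥0∞} (hg : AEMeasurable g ν) :
    ∫⁻ x, ∫⁻ y, g (Function.update x j y) ∂μ ∂ν = ∫⁻ x, g x ∂ν := by
  have hΦ := measurePreserving_update (μ := μ) j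
  calc ∫⁻ x, ∫⁻ y, g (Function.update x j y) ∂μ ∂ν
      = ∫⁻ p, g (Function.update p.1 j p.2) ∂(Measure.prod ν μ) :=
        (lintegral_prod _ (hg.comp_quasiMeasurePreserving hΦ.quasiMeasurePreserving)).symm
    _ = ∫⁻ x, g x ∂ν := by
        rw [← lintegral_map' (by rwa [hΦ.map_eq]) hΦ.aemeasurable, hΦ.map_eq]

theorem neighbor_congr_ae (j : ι) {f g : (ι → X) → E} (hfg : f =ᵐ[ν] g) :
    neighbor μ j f =ᵐ[ν] neighbor μ j g := by
  have := (measurePreserving_update (μ := μ) j).quasiMeasurePreserving.ae_eq_comp hfg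
  filter_upwards [Measure.ae_ae_of_ae_prod this] with x hx
  exact integral_congr_ae hx

theorem MeasureTheory.AEStronglyMeasurable.neighbor (j : ι) {f : (ι → X) → E}
    (hf : AEStronglyMeasurable f ν) : AEStronglyMeasurable (neighbor μ j f) ν :=
  (hf.comp_measurePreserving (measurePreserving_update j)).integral_prod_right'

theorem eLpNorm_neighbor_le (j : ι) {p : ℝ≥0∞} (hp : 1 ≤ p) (hp_top : p ≠ ∞)
    {f : (ι → X) → E} (hf : AEStronglyMeasurable f ν) :
    eLpNorm (neighbor μ j f) p ν ≤ eLpNorm f p ν := by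
  rw [eLpNorm_congr_ae (neighbor_congr_ae j hf.ae_eq_mk), eLpNorm_congr_ae hf.ae_eq_mk]
  set g := hf.mk f
  have hg : StronglyMeasurable g := hf.stronglyMeasurable_mk
  have hp0 : p ≠ 0 := (zero_lt_one.trans_le hp).ne'
  have hq : 0 < p.toReal := ENNReal.toReal_pos hp0 hp_top
  have hslice : ∀ x, ‖neighbor μ j g x‖ₑ ^ p.toReal ≤
      ∫⁻ y, ‖g (Function.update x j y)‖ₑ ^ p.toReal ∂μ := by
    intro x
    have hgx : StronglyMeasurable fun y => g (Function.update x j y) :=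
      hg.comp_measurable (measurable_update x)
    calc ‖neighbor μ j g x‖ₑ ^ p.toReal
        ≤ eLpNorm (fun y => g (Function.update x j y)) 1 μ ^ p.toReal := by
          rw [eLpNorm_one_eq_lintegral_enorm]
          gcongr
          exact enorm_integral_le_lintegral_enorm _
      _ ≤ eLpNorm (fun y => g (Function.update x j y)) p μ ^ p.toReal := by
          gcongr
          exact eLpNorm_le_eLpNorm_of_exponent_le hp hgx.aestronglyMeasurable
      _ = ∫⁻ y, ‖g (Function.update x j y)‖ₑ ^ p.toReal ∂μ := by
          rw [eLpNorm_eq_lintegral_rpow_enorm_toReal hp0 hp_top, ← ENNReal.rpow_mul,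
            one_div_mul_cancel hq.ne', ENNReal.rpow_one]
  rw [eLpNorm_eq_lintegral_rpow_enorm_toReal hp0 hp_top,
    eLpNorm_eq_lintegral_rpow_enorm_toReal hp0 hp_top]
  gcongr ?_ ^ _
  calc ∫⁻ x, ‖neighbor μ j g x‖ₑ ^ p.toReal ∂ν
      ≤ ∫⁻ x, ∫⁻ y, ‖g (Function.update x j y)‖ₑ ^ p.toReal ∂μ ∂ν := lintegral_mono hslice
    _ = ∫⁻ x, ‖g x‖ₑ ^ p.toReal ∂ν :=
        lintegral_lintegral_update j (hg.enorm.pow_const _).aemeasurable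

theorem MeasureTheory.MemLp.neighbor (j : ι) {p : ℝ≥0∞} (hp : 1 ≤ p) (hp_top : p ≠ ∞)
    {f : (ι → X) → E} (hf : MemLp f p ν) : MemLp (neighbor μ j f) p ν :=
  ⟨hf.1.neighbor j, (eLpNorm_neighbor_le j hp hp_top hf.1).trans_lt hf.2⟩

theorem neighbor_sub (j : ι) {f g : (ι → X) → E} (hf : Integrable f ν) (hg : Integrable g ν) :
    neighbor μ j (f - g) =ᵐ[ν] neighbor μ j f - neighbor μ j g := by
  have hΦ := measurePreserving_update (μ := μ) j
  filter_upwards [(hΦ.integrable_comp_of_integrable hf).prod_right_ae,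
    (hΦ.integrable_comp_of_integrable hg).prod_right_ae] with x hfx hgx
  exact integral_sub hfx hgx

end Neighbor

section RelComplete

variable {α : Type*} {m : MeasurableSpace α} [mα : MeasurableSpace α] {ν : Measure α}

theorem RelComplete.measurableSet_of_ae_eq (hm : RelComplete ν ⟨m⟩) {s t : Set α}
    (hs : MeasurableSet s) (ht : MeasurableSet[m] t) (hst : s =ᵐ[ν] t) : MeasurableSet[m] s :=
  hm s t hs ht (measure_symmDiff_eq_zero_iff.mpr hst)

theorem relComplete_self : RelComplete ν ⟨mα⟩ := fun _ _ hs _ _ => hs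

theorem relComplete_sInf {S : Set (MeasurableSpace α)} (hS : ∀ m ∈ S, RelComplete ν ⟨m⟩) :
    RelComplete ν ⟨sInf S⟩ := by
  intro s t hs ht hst
  simp only [MeasurableSpace.measurableSet_sInf] at ht ⊢
  exact fun m hm => hS m hm s t hs (ht m hm) hst

theorem aestronglyMeasurable_sInf_of_relComplete {S : Set (MeasurableSpace α)}
    (hS : ∀ m ∈ S, RelComplete ν ⟨m⟩) {f : α → ℝ} (hf : AEStronglyMeasurable f ν)
    (hfS : ∀ m ∈ S, AEStronglyMeasurable[m] f ν) : AEStronglyMeasurable[sInf S] f ν := by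
  refine ⟨hf.mk f, (measurable_of_Ioi fun a => ?_).stronglyMeasurable, hf.ae_eq_mk⟩
  have hmk : MeasurableSet (hf.mk f ⁻¹' Set.Ioi a) :=
    hf.stronglyMeasurable_mk.measurable measurableSet_Ioi
  rw [MeasurableSpace.measurableSet_sInf]
  intro m' hm'
  obtain ⟨g, hg, hfg⟩ := hfS m' hm'
  exact (hS m' hm').measurableSet_of_ae_eq (mα := mα) hmk (hg.measurable measurableSet_Ioi)
    ((hf.ae_eq_mk.symm.trans hfg).preimage _)

def relCompletion {α : Type*} [mα : MeasurableSpace α] (ν : Measure α) (m : MeasurableSpace α) :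
    MeasurableSpace α where
  MeasurableSet' s := MeasurableSet[mα] s ∧ ∃ t, MeasurableSet[m] t ∧ s =ᵐ[ν] t
  measurableSet_empty := ⟨@MeasurableSet.empty _ mα, ∅, @MeasurableSet.empty _ m, .rfl⟩
  measurableSet_compl := fun _ ⟨hs, t, ht, hst⟩ => ⟨hs.compl, tᶜ, ht.compl, hst.compl⟩
  measurableSet_iUnion s hs := by
    choose hs t ht hst using hs
    exact ⟨.iUnion hs, ⋃ n, t n, .iUnion ht, Filter.EventuallyEq.countable_iUnion hst⟩

theorem relCompletion_le : relCompletion ν m ≤ mα := fun _ hs => hs.1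

theorem le_relCompletion (hm : m ≤ mα) : m ≤ relCompletion ν m :=
  fun s hs => ⟨hm s hs, s, hs, .rfl⟩

theorem relComplete_relCompletion : RelComplete ν ⟨relCompletion ν m⟩ :=
  fun _ _ hs ⟨_, t, ht, hzt⟩ hsz => ⟨hs, t, ht, (measure_symmDiff_eq_zero_iff.mp hsz).trans hzt⟩

theorem condExp_ae_eq_self_of_relCompletion [IsFiniteMeasure ν] (hm : m ≤ mα) {f : α → ℝ}
    (hf : Integrable f ν) (hfm : AEStronglyMeasurable[relCompletion ν m] f ν) :
    ν[f|m] =ᵐ[ν] f := by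
  refine ae_eq_of_forall_setIntegral_eq_of_sigmaFinite' relCompletion_le
    (fun _ _ _ => integrable_condExp.integrableOn) (fun _ _ _ => hf.integrableOn)
    (fun s ⟨_, t, ht, hst⟩ _ => ?_)
    (stronglyMeasurable_condExp.mono (le_relCompletion hm)).aestronglyMeasurable hfm
  rw [setIntegral_congr_set hst, setIntegral_congr_set hst, setIntegral_condExp hm hf ht]

theorem aestronglyMeasurable_of_tendsto_eLpNorm {E : Type*} [NormedAddCommGroup E]
    [CompleteSpace E] (hm : m ≤ mα) {p : ℝ≥0∞} [Fact (1 ≤ p)] {f : ℕ → α → E} {g : α → E}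
    (hf : ∀ n, MemLp (f n) p ν) (hfm : ∀ n, AEStronglyMeasurable[m] (f n) ν) (hg : MemLp g p ν)
    (hfg : Tendsto (fun n => eLpNorm (f n - g) p ν) atTop (𝓝 0)) :
    AEStronglyMeasurable[m] g ν :=
  ((isClosed_aestronglyMeasurable hm).mem_of_tendsto
    ((Lp.tendsto_Lp_iff_tendsto_eLpNorm'' f hf g hg).mpr hfg)
    (.of_forall fun n => (hfm n).congr (hf n).coeFn_toLp.symm)).congr hg.coeFn_toLp

end RelComplete

section Construction

variable {X : Type*} [MeasurableSpace X] {μ : Measure X} {W : X → X → ℝ} {k : ℕ}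

local notation "π" => (MeasurableSpace.pi : MeasurableSpace (Fin k → X))
local notation "μᵏ" => Measure.pi fun _ : Fin k => μ

theorem IsGraphon.measurable_comp_eval {ι : Type*} (hW : IsGraphon W) (i j : ι) :
    Measurable fun x : ι → X => W (x i) (x j) := by
  have := hW.measurable
  fun_prop

theorem aInvariant_pi (hW : IsGraphon W) : AInvariant μ W (k := k) ⟨π⟩ := by
  intro i j _ f hf _
  have hbound : ∀ x : Fin k → X, ‖W (x i) (x j) * f x‖ ≤ ‖f x‖ := fun x => by
    rw [norm_mul, Real.norm_of_nonneg (hW.nonneg _ _)]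
    exact mul_le_of_le_one_left (norm_nonneg _) (hW.le_one _ _)
  have hwf := (hW.measurable_comp_eval i j).aestronglyMeasurable.mul hf.1
  exact ⟨hf.of_le hwf (.of_forall hbound), hwf⟩

theorem cSeq_le_succ (n : ℕ) : CSeq μ W k n ≤ CSeq μ W k (n + 1) :=
  le_sInf fun _ hm => hm.2.2.1

theorem monotone_cSeq : Monotone (CSeq μ W k) := monotone_nat_of_le_succ cSeq_le_succ

theorem cSeq_le_cLimit (n : ℕ) : CSeq μ W k n ≤ CLimit μ W k := le_sInf fun _ hm => hm.2.2 n

theorem relComplete_cLimit : RelComplete μᵏ ⟨CLimit μ W k⟩ :=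
  relComplete_sInf fun _ hm => hm.2.1

theorem cLimit_le {C : SubSigma (Fin k → X)} (hC : C.σ ≤ π) (hCc : RelComplete μᵏ C)
    (hA : AInvariant μ W C) (hN : NMapsInto μ C C) : CLimit μ W k ≤ C.σ := by
  refine sInf_le ⟨hC, hCc, fun n => ?_⟩
  induction n with
  | zero => exact sInf_le ⟨hC, hCc, hA⟩
  | succ n ih => exact sInf_le ⟨hC, hCc, ih, fun j f hf hfm => hN j f hf (hfm.mono ih)⟩

variable [IsProbabilityMeasure μ]

theorem nMapsInto_pi (C : SubSigma (Fin k → X)) : NMapsInto μ C ⟨π⟩ := fun j _ hf _ =>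
  ⟨hf.neighbor j one_le_two ENNReal.ofNat_ne_top, hf.1.neighbor j⟩

theorem cSeq_le_pi (hW : IsGraphon W) (n : ℕ) : CSeq μ W k n ≤ π := by
  induction n with
  | zero => exact sInf_le ⟨le_rfl, relComplete_self, aInvariant_pi hW⟩
  | succ n ih => exact sInf_le ⟨le_rfl, relComplete_self, ih, nMapsInto_pi _⟩

theorem aInvariant_of_cSeq_zero_le (hW : IsGraphon W) {C : SubSigma (Fin k → X)}
    (hC : CSeq μ W k 0 ≤ C.σ) : AInvariant μ W C := by
  intro i j hij f hf hfm
  refine ⟨(aInvariant_pi hW i j hij f hf hf.1).1, ?_⟩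
  have hw : AEStronglyMeasurable[CSeq μ W k 0] (fun x : Fin k → X => W (x i) (x j)) μᵏ := by
    rw [CSeq]
    refine aestronglyMeasurable_sInf_of_relComplete (fun m' hm' => hm'.2.1)
      (hW.measurable_comp_eval i j).aestronglyMeasurable fun m' hm' => ?_
    simpa using (hm'.2.2 i j hij (fun _ => 1) (memLp_const 1) aestronglyMeasurable_const).2
  exact (hw.mono hC).mul hfm

theorem nMapsInto_cSeq_succ (n : ℕ) : NMapsInto μ ⟨CSeq μ W k n⟩ ⟨CSeq μ W k (n + 1)⟩ := by
  intro j f hf hfm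
  refine ⟨hf.neighbor j one_le_two ENNReal.ofNat_ne_top, ?_⟩
  show AEStronglyMeasurable[CSeq μ W k (n + 1)] _ _
  rw [CSeq]
  exact aestronglyMeasurable_sInf_of_relComplete (fun _ hm => hm.2.1) (hf.1.neighbor j)
    fun _ hm => (hm.2.2.2 j f hf hfm).2

theorem cLimit_le_pi (hW : IsGraphon W) : CLimit μ W k ≤ π :=
  sInf_le ⟨le_rfl, relComplete_self, cSeq_le_pi hW⟩

variable (μ W k) in
def cSeqFiltration (hW : IsGraphon W) : Filtration ℕ π :=
  ⟨CSeq μ W k, monotone_cSeq, cSeq_le_pi hW⟩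

theorem cLimit_le_relCompletion (hW : IsGraphon W) :
    CLimit μ W k ≤ relCompletion μᵏ (⨆ n, CSeq μ W k n) :=
  sInf_le ⟨relCompletion_le, relComplete_relCompletion, fun n =>
    (le_iSup (CSeq μ W k) n).trans (le_relCompletion (iSup_le (cSeq_le_pi hW)))⟩

theorem nMapsInto_cLimit (hW : IsGraphon W) : NMapsInto μ ⟨CLimit μ W k⟩ ⟨CLimit μ W k⟩ := by
  intro j f hf hfm
  refine ⟨hf.neighbor j one_le_two ENNReal.ofNat_ne_top, ?_⟩
  show AEStronglyMeasurable[CLimit μ W k] _ _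
  let ℱ := cSeqFiltration μ W k hW
  have hf1 : Integrable f μᵏ := hf.integrable one_le_two
  have hf_lim : μᵏ[f|⨆ n, ℱ n] =ᵐ[μᵏ] f :=
    condExp_ae_eq_self_of_relCompletion (iSup_le ℱ.le) hf1 (hfm.mono (cLimit_le_relCompletion hW))
  have hconv : Tendsto (fun n => eLpNorm (μᵏ[f|ℱ n] - f) 1 μᵏ) atTop (𝓝 0) :=
    (tendsto_eLpNorm_condExp f).congr fun n =>
      eLpNorm_congr_ae (EventuallyEq.rfl.sub hf_lim)
  have hNconv : Tendsto (fun n => eLpNorm (neighbor μ j μᵏ[f|ℱ n] - neighbor μ j f) 1 μᵏ)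
      atTop (𝓝 0) := by
    refine tendsto_of_tendsto_of_tendsto_of_le_of_le tendsto_const_nhds hconv
      (fun _ => zero_le) fun n => ?_
    rw [← eLpNorm_congr_ae (neighbor_sub j integrable_condExp hf1)]
    exact eLpNorm_neighbor_le j le_rfl ENNReal.one_ne_top (integrable_condExp.sub hf1).1
  have hmeas : ∀ n, AEStronglyMeasurable[CLimit μ W k] (neighbor μ j μᵏ[f|ℱ n]) μᵏ := fun n =>
    ((nMapsInto_cSeq_succ n j _ (hf.condExp one_le_two)
      stronglyMeasurable_condExp.aestronglyMeasurable).2).mono (cSeq_le_cLimit (n + 1))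
  exact aestronglyMeasurable_of_tendsto_eLpNorm (cLimit_le_pi hW)
    (fun n => (memLp_one_iff_integrable.mpr integrable_condExp).neighbor j le_rfl
      ENNReal.one_ne_top) hmeas ((memLp_one_iff_integrable.mpr hf1).neighbor j le_rfl
      ENNReal.one_ne_top) hNconv

end Construction

theorem stmt11_general {X : Type*} [MeasurableSpace X] (μ : Measure X) [IsProbabilityMeasure μ]
    {k : ℕ} (W : X → X → ℝ) (hW : IsGraphon W) :
    (CLimit μ W k ≤ (MeasurableSpace.pi : MeasurableSpace (Fin k → X)) ∧
      RelComplete (mα := (MeasurableSpace.pi : MeasurableSpace (Fin k → X))) (Measure.pi fun _ : Fin k => μ) ⟨CLimit μ W k⟩ ∧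
      AInvariant μ W ⟨CLimit μ W k⟩ ∧
      NMapsInto μ ⟨CLimit μ W k⟩ ⟨CLimit μ W k⟩) ∧
    ∀ m : MeasurableSpace (Fin k → X),
      m ≤ (MeasurableSpace.pi : MeasurableSpace (Fin k → X)) →
      RelComplete (mα := (MeasurableSpace.pi : MeasurableSpace (Fin k → X))) (Measure.pi fun _ : Fin k => μ) ⟨m⟩ →
      AInvariant μ W ⟨m⟩ → NMapsInto μ ⟨m⟩ ⟨m⟩ →
      CLimit μ W k ≤ m :=
  ⟨⟨cLimit_le_pi hW, relComplete_cLimit, aInvariant_of_cSeq_zero_le hW (cSeq_le_cLimit 0),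
      nMapsInto_cLimit hW⟩,
    fun m hm hmc hA hN => cLimit_le (C := ⟨m⟩) hm hmc hA hN⟩

/-- The σ-algebra `C^k_W` produced by the iterative construction is the
minimum `μ^{⊗k}`-relatively complete sub-σ-algebra of `𝓑^{⊗k}` whose `L²` subspace is
invariant under every operator of the family `𝕋^k_W` (all neighbor operators `N_j` and all
adjacency operators `A^W_{ij}`). -/
theorem stmt11 {X : Type*} [MeasurableSpace X] (μ : Measure X) [IsProbabilityMeasure μ]
    {k : ℕ} (hk : 1 ≤ k) (W : X → X → ℝ) (hW : IsGraphon W) :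
    (CLimit μ W k ≤ (MeasurableSpace.pi : MeasurableSpace (Fin k → X)) ∧
      RelComplete (mα := (MeasurableSpace.pi : MeasurableSpace (Fin k → X))) (Measure.pi fun _ : Fin k => μ) ⟨CLimit μ W k⟩ ∧
      AInvariant μ W ⟨CLimit μ W k⟩ ∧
      NMapsInto μ ⟨CLimit μ W k⟩ ⟨CLimit μ W k⟩) ∧
    ∀ m : MeasurableSpace (Fin k → X),
      m ≤ (MeasurableSpace.pi : MeasurableSpace (Fin k → X)) →
      RelComplete (mα := (MeasurableSpace.pi : MeasurableSpace (Fin k → X))) (Measure.pi fun _ : Fin k => μ) ⟨m⟩ →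
      AInvariant μ W ⟨m⟩ → NMapsInto μ ⟨m⟩ ⟨m⟩ →
      CLimit μ W k ≤ m :=
  stmt11_general μ W hW
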